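/- Let r ∈ ℝ, σ > 0, K₀ > 0 and T > 0, and let N denote the cumulative distribution function of the standard normal distribution. Define, for (t,s) ∈ (0,T)×(0,∞), d₊(t,s) := [ln(s/K₀) + (r + σ²/2)(T−t)]/(σ·√(T−t)), d₋(t,s) := [ln(s/K₀) + (r − σ²/2)(T−t)]/(σ·√(T−t)), and η(t,s) := s·N(d₊(t,s)) − K₀·e^{−r(T−t)}·N(d₋(t,s)). Then η satisfies the Black–Scholes PDE ∂η/∂t + r·s·∂η/∂s + (1/2)·σ²·s²·∂²η/∂s² = r·η at every point of (0,T)×(0,∞), and for every s > 0 one has η(t,s) → max(s−K₀, 0) as t ↑ T. -/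

import Mathlib

open MeasureTheory Real Filter Set

/-- The cumulative distribution function of the standard normal distribution. -/
noncomputable def stdN (x : ℝ) : ℝ :=
  ∫ u in Set.Iic x, Real.exp (-u^2 / 2) / Real.sqrt (2 * Real.pi)

noncomputable def dplus (r σ K₀ T t s : ℝ) : ℝ :=
  (Real.log (s / K₀) + (r + σ^2 / 2) * (T - t)) / (σ * Real.sqrt (T - t))

noncomputable def dminus (r σ K₀ T t s : ℝ) : ℝ :=
  (Real.log (s / K₀) + (r - σ^2 / 2) * (T - t)) / (σ * Real.sqrt (T - t))

/-- The Black–Scholes price of a European call option. -/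
noncomputable def bsCall (r σ K₀ T t s : ℝ) : ℝ :=
  s * stdN (dplus r σ K₀ T t s) - K₀ * Real.exp (-r * (T - t)) * stdN (dminus r σ K₀ T t s)

/-! The computation rests on the identity `s φ(d₊) = K₀ e^{-r(T-t)} φ(d₋)`, a rewriting of
`d₊² - d₋² = 2 (log (s/K₀) + r (T-t))`. It makes the density terms cancel when `bsCall` is
differentiated, so that `∂ₛη = N(d₊)`, `∂ₛ²η = φ(d₊)/(sσ√(T-t))` and, using only
`d₊ = d₋ + σ√(T-t)`, `∂ₜη = -σ s φ(d₊)/(2√(T-t)) - r K₀ e^{-r(T-t)} N(d₋)`; the PDE is then an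
algebraic identity. As `t → T⁻`, both `d₊` and `d₋` tend to `+∞`, `-∞` or `0` according as
`s > K₀`, `s < K₀` or `s = K₀`, so `N(d₊)` and `N(d₋)` share a limit `ℓ`, and
`(s - K₀) ℓ = max (s - K₀) 0`. -/

open ProbabilityTheory Topology

local notation "φ" => gaussianPDFReal 0 1

lemma continuous_gaussianPDFReal (μ : ℝ) (v : NNReal) : Continuous (gaussianPDFReal μ v) := by
  rw [gaussianPDFReal_def]; fun_prop

lemma stdN_eq_integral (x : ℝ) : stdN x = ∫ u in Iic x, φ u := by
  unfold stdN
  congr 1 with u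
  simp [gaussianPDFReal, div_eq_inv_mul]

lemma stdN_eq_cdf : stdN = cdf (gaussianReal 0 1) := by
  ext x
  rw [stdN_eq_integral, cdf_eq_real, measureReal_def,
    gaussianReal_apply_eq_integral _ one_ne_zero, ENNReal.toReal_ofReal
      (setIntegral_nonneg measurableSet_Iic fun u _ => gaussianPDFReal_nonneg 0 1 u)]

lemma hasDerivAt_stdN (x : ℝ) : HasDerivAt stdN (φ x) x := by
  have hφ : Integrable φ := integrable_gaussianPDFReal 0 1
  have hφc : Continuous φ := continuous_gaussianPDFReal 0 1
  have hFTC : HasDerivAt (fun y => stdN 0 + ∫ u in (0:ℝ)..y, φ u) (φ x) x :=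
    (intervalIntegral.integral_hasDerivAt_right hφ.intervalIntegrable
      (hφc.stronglyMeasurableAtFilter _ _) hφc.continuousAt).const_add _
  refine hFTC.congr_of_eventuallyEq (Eventually.of_forall fun y => ?_)
  simp only [stdN_eq_integral, ← intervalIntegral.integral_Iic_sub_Iic
    hφ.integrableOn hφ.integrableOn, add_sub_cancel]

lemma tendsto_stdN_atTop : Tendsto stdN atTop (𝓝 1) := stdN_eq_cdf ▸ tendsto_cdf_atTop _

lemma tendsto_stdN_atBot : Tendsto stdN atBot (𝓝 0) := stdN_eq_cdf ▸ tendsto_cdf_atBot _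

lemma gaussianPDFReal_zero_one_eq_mul_exp (a b : ℝ) : φ a = φ b * exp ((b ^ 2 - a ^ 2) / 2) := by
  simp only [gaussianPDFReal, NNReal.coe_one, mul_one, sub_zero, mul_assoc, ← exp_add]
  ring_nf

section BlackScholes

variable {r σ K₀ T t s : ℝ}

lemma dplus_eq_dminus_add (hσ : σ ≠ 0) (ht : t < T) :
    dplus r σ K₀ T t s = dminus r σ K₀ T t s + σ * √(T - t) := by
  have hτ : 0 < T - t := sub_pos.2 ht
  have hq : √(T - t) ≠ 0 := (sqrt_pos.2 hτ).ne'
  unfold dplus dminus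
  field_simp
  rw [sq_sqrt hτ.le]
  ring

lemma dplus_sq_sub_dminus_sq (hσ : σ ≠ 0) (ht : t < T) :
    dplus r σ K₀ T t s ^ 2 - dminus r σ K₀ T t s ^ 2 = 2 * (log (s / K₀) + r * (T - t)) := by
  have hτ : 0 < T - t := sub_pos.2 ht
  have hq : √(T - t) ≠ 0 := (sqrt_pos.2 hτ).ne'
  unfold dplus dminus
  field_simp
  rw [sq_sqrt hτ.le]
  ring

lemma mul_gaussianPDFReal_dplus (hσ : σ ≠ 0) (hK₀ : 0 < K₀) (hs : 0 < s) (ht : t < T) :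
    s * φ (dplus r σ K₀ T t s) = K₀ * exp (-r * (T - t)) * φ (dminus r σ K₀ T t s) := by
  have hexp : exp ((dminus r σ K₀ T t s ^ 2 - dplus r σ K₀ T t s ^ 2) / 2)
      = K₀ / s * exp (-r * (T - t)) := by
    rw [← neg_sub, dplus_sq_sub_dminus_sq hσ ht,
      show -(2 * (log (s / K₀) + r * (T - t))) / 2 = -log (s / K₀) + -r * (T - t) by ring,
      exp_add, exp_neg, exp_log (div_pos hs hK₀), inv_div]
  rw [gaussianPDFReal_zero_one_eq_mul_exp _ (dminus r σ K₀ T t s), hexp]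
  field_simp

lemma hasDerivAt_log_div_add_div (c v : ℝ) (hK₀ : K₀ ≠ 0) (hs : s ≠ 0) :
    HasDerivAt (fun x => (log (x / K₀) + c) / v) (s⁻¹ / v) s := by
  have h := (((hasDerivAt_id' s).div_const K₀).log (div_ne_zero hs hK₀)).add_const c |>.div_const v
  refine h.congr_deriv ?_
  field_simp

lemma hasDerivAt_bsCall_spot (hσ : σ ≠ 0) (hK₀ : 0 < K₀) (hs : 0 < s) (ht : t < T) :
    HasDerivAt (fun x => bsCall r σ K₀ T t x) (stdN (dplus r σ K₀ T t s)) s := by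
  have hdplus : HasDerivAt (fun x => dplus r σ K₀ T t x) (s⁻¹ / (σ * √(T - t))) s :=
    hasDerivAt_log_div_add_div _ _ hK₀.ne' hs.ne'
  have hdminus : HasDerivAt (fun x => dminus r σ K₀ T t x) (s⁻¹ / (σ * √(T - t))) s :=
    hasDerivAt_log_div_add_div _ _ hK₀.ne' hs.ne'
  have h := ((hasDerivAt_id s).mul ((hasDerivAt_stdN _).comp s hdplus)).sub
    (((hasDerivAt_stdN _).comp s hdminus).const_mul (K₀ * exp (-r * (T - t))))
  refine h.congr_deriv ?_
  simp only [id, Function.comp_apply, one_mul]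
  linear_combination (s⁻¹ / (σ * √(T - t))) * mul_gaussianPDFReal_dplus hσ hK₀ hs ht

lemma hasDerivAt_deriv_bsCall_spot (hσ : σ ≠ 0) (hK₀ : 0 < K₀) (hs : 0 < s) (ht : t < T) :
    HasDerivAt (deriv fun x => bsCall r σ K₀ T t x)
      (φ (dplus r σ K₀ T t s) * (s⁻¹ / (σ * √(T - t)))) s := by
  refine ((hasDerivAt_stdN _).comp s
    (hasDerivAt_log_div_add_div _ _ hK₀.ne' hs.ne')).congr_of_eventuallyEq ?_
  filter_upwards [eventually_gt_nhds hs] with x hx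
  exact (hasDerivAt_bsCall_spot hσ hK₀ hx ht).deriv

lemma hasDerivAt_bsCall_time (hσ : σ ≠ 0) (hK₀ : 0 < K₀) (hs : 0 < s) (ht : t < T) :
    HasDerivAt (fun u => bsCall r σ K₀ T u s)
      (-(σ * s * φ (dplus r σ K₀ T t s) / (2 * √(T - t)))
        - r * K₀ * exp (-r * (T - t)) * stdN (dminus r σ K₀ T t s)) t := by
  have hτ : T - t ≠ 0 := (sub_pos.2 ht).ne'
  have hvol₀ : σ * √(T - t) ≠ 0 := mul_ne_zero hσ (sqrt_ne_zero'.2 (sub_pos.2 ht))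
  have hdminus : HasDerivAt (fun u => dminus r σ K₀ T u s)
      (deriv (fun u => dminus r σ K₀ T u s) t) t := by
    unfold dminus
    refine DifferentiableAt.hasDerivAt ?_
    fun_prop (disch := assumption)
  have hvol : HasDerivAt (fun u => σ * √(T - u)) (σ * (-1 / (2 * √(T - t)))) t :=
    (((hasDerivAt_id t).const_sub T).sqrt hτ).const_mul σ
  have hdplus : HasDerivAt (fun u => dplus r σ K₀ T u s)
      (deriv (fun u => dminus r σ K₀ T u s) t + σ * (-1 / (2 * √(T - t)))) t := by
    refine (hdminus.add hvol).congr_of_eventuallyEq ?_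
    filter_upwards [eventually_lt_nhds ht] with u hu
    exact dplus_eq_dminus_add hσ hu
  have hdisc : HasDerivAt (fun u => exp (-r * (T - u))) (exp (-r * (T - t)) * r) t := by
    simpa using (((hasDerivAt_id t).const_sub T).const_mul (-r)).exp
  have h := (((hasDerivAt_stdN _).comp t hdplus).const_mul s).sub
    ((hdisc.const_mul K₀).mul ((hasDerivAt_stdN _).comp t hdminus))
  refine h.congr_deriv ?_
  simp only [Function.comp_apply]
  linear_combination
    (deriv (fun u => dminus r σ K₀ T u s) t) * mul_gaussianPDFReal_dplus hσ hK₀ hs ht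

lemma tendsto_mul_sqrt_sub_nhdsLT (hσ : 0 < σ) :
    Tendsto (fun t => σ * √(T - t)) (𝓝[<] T) (𝓝[>] 0) := by
  refine tendsto_nhdsWithin_of_tendsto_nhds_of_eventually_within _ ?_ ?_
  · have h : Continuous fun t => σ * √(T - t) := by fun_prop
    simpa using h.tendsto T |>.mono_left nhdsWithin_le_nhds
  · filter_upwards [self_mem_nhdsWithin] with t (ht : t < T)
    exact mul_pos hσ (sqrt_pos.2 (sub_pos.2 ht))

lemma tendsto_add_mul_sub_nhdsLT (L a : ℝ) :
    Tendsto (fun t => L + a * (T - t)) (𝓝[<] T) (𝓝 L) := by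
  have h : Continuous fun t => L + a * (T - t) := by fun_prop
  simpa using h.tendsto T |>.mono_left nhdsWithin_le_nhds

lemma tendsto_div_mul_sqrt_atTop (hσ : 0 < σ) {L : ℝ} (hL : 0 < L) (a : ℝ) :
    Tendsto (fun t => (L + a * (T - t)) / (σ * √(T - t))) (𝓝[<] T) atTop :=
  (tendsto_add_mul_sub_nhdsLT L a).pos_mul_atTop hL
    (tendsto_inv_nhdsGT_zero.comp (tendsto_mul_sqrt_sub_nhdsLT hσ))

lemma tendsto_div_mul_sqrt_atBot (hσ : 0 < σ) {L : ℝ} (hL : L < 0) (a : ℝ) :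
    Tendsto (fun t => (L + a * (T - t)) / (σ * √(T - t))) (𝓝[<] T) atBot :=
  (tendsto_add_mul_sub_nhdsLT L a).neg_mul_atTop hL
    (tendsto_inv_nhdsGT_zero.comp (tendsto_mul_sqrt_sub_nhdsLT hσ))

lemma tendsto_div_mul_sqrt_zero (hσ : σ ≠ 0) (a : ℝ) :
    Tendsto (fun t => (0 + a * (T - t)) / (σ * √(T - t))) (𝓝[<] T) (𝓝 0) := by
  have h : Tendsto (fun t => a / σ * √(T - t)) (𝓝[<] T) (𝓝 (a / σ * √(T - T))) :=
    ((continuous_const.mul (continuous_const.sub continuous_id).sqrt).tendsto T).mono_left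
      nhdsWithin_le_nhds
  rw [sub_self, sqrt_zero, mul_zero] at h
  refine h.congr' ?_
  filter_upwards [self_mem_nhdsWithin] with t (ht : t < T)
  have hτ : 0 < T - t := sub_pos.2 ht
  have hq : √(T - t) ≠ 0 := (sqrt_pos.2 hτ).ne'
  field_simp
  rw [sq_sqrt hτ.le]
  ring

lemma exists_tendsto_stdN_log_div (hσ : 0 < σ) (hK₀ : 0 < K₀) (hs : 0 < s) :
    ∃ ℓ, (s - K₀) * ℓ = max (s - K₀) 0 ∧ ∀ a, Tendsto
      (fun t => stdN ((log (s / K₀) + a * (T - t)) / (σ * √(T - t)))) (𝓝[<] T) (𝓝 ℓ) := by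
  rcases lt_trichotomy s K₀ with hlt | rfl | hgt
  · have hL : log (s / K₀) < 0 := log_neg (div_pos hs hK₀) ((div_lt_one hK₀).2 hlt)
    refine ⟨0, by simp [hlt.le], fun a => ?_⟩
    exact tendsto_stdN_atBot.comp (tendsto_div_mul_sqrt_atBot hσ hL a)
  · refine ⟨stdN 0, by simp, fun a => ?_⟩
    rw [div_self hs.ne', log_one]
    exact (hasDerivAt_stdN 0).continuousAt.tendsto.comp (tendsto_div_mul_sqrt_zero hσ.ne' a)
  · have hL : 0 < log (s / K₀) := log_pos ((one_lt_div hK₀).2 hgt)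
    refine ⟨1, by simp [hgt.le], fun a => ?_⟩
    exact tendsto_stdN_atTop.comp (tendsto_div_mul_sqrt_atTop hσ hL a)

lemma tendsto_bsCall_nhdsLT (hσ : 0 < σ) (hK₀ : 0 < K₀) (hs : 0 < s) :
    Tendsto (fun t => bsCall r σ K₀ T t s) (𝓝[<] T) (𝓝 (max (s - K₀) 0)) := by
  obtain ⟨ℓ, hℓ, hN⟩ := exists_tendsto_stdN_log_div (T := T) hσ hK₀ hs
  have hdisc : Tendsto (fun t => exp (-r * (T - t))) (𝓝[<] T) (𝓝 1) := by
    have h : Continuous fun t => exp (-r * (T - t)) := by fun_prop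
    simpa using h.tendsto T |>.mono_left nhdsWithin_le_nhds
  have h := ((hN (r + σ ^ 2 / 2)).const_mul s).sub
    ((hdisc.const_mul K₀).mul (hN (r - σ ^ 2 / 2)))
  rw [← hℓ, show (s - K₀) * ℓ = s * ℓ - K₀ * 1 * ℓ by ring]
  exact h

end BlackScholes

theorem stmt_17_general (r σ K₀ T : ℝ) (hσ : 0 < σ) (hK₀ : 0 < K₀) :
    (∀ t ∈ Set.Ioo (0:ℝ) T, ∀ s ∈ Set.Ioi (0:ℝ),
      ∃ ηt ηs ηss : ℝ,
        HasDerivAt (fun u => bsCall r σ K₀ T u s) ηt t ∧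
        HasDerivAt (fun x => bsCall r σ K₀ T t x) ηs s ∧
        HasDerivAt (deriv (fun x => bsCall r σ K₀ T t x)) ηss s ∧
        ηt + r * s * ηs + (1/2) * σ^2 * s^2 * ηss = r * bsCall r σ K₀ T t s) ∧
    (∀ s ∈ Set.Ioi (0:ℝ),
      Tendsto (fun t => bsCall r σ K₀ T t s) (nhdsWithin T (Set.Iio T))
        (nhds (max (s - K₀) 0))) := by
  refine ⟨fun t ⟨_, ht⟩ s (hs : 0 < s) => ?_, fun s hs => tendsto_bsCall_nhdsLT hσ hK₀ hs⟩
  refine ⟨_, _, _, hasDerivAt_bsCall_time hσ.ne' hK₀ hs ht,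
    hasDerivAt_bsCall_spot hσ.ne' hK₀ hs ht, hasDerivAt_deriv_bsCall_spot hσ.ne' hK₀ hs ht, ?_⟩
  have hq : √(T - t) ≠ 0 := (sqrt_pos.2 (sub_pos.2 ht)).ne'
  unfold bsCall
  field_simp
  ring

theorem stmt_17 (r σ K₀ T : ℝ) (hσ : 0 < σ) (hK₀ : 0 < K₀) (hT : 0 < T) :
    (∀ t ∈ Set.Ioo (0:ℝ) T, ∀ s ∈ Set.Ioi (0:ℝ),
      ∃ ηt ηs ηss : ℝ,
        HasDerivAt (fun u => bsCall r σ K₀ T u s) ηt t ∧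
        HasDerivAt (fun x => bsCall r σ K₀ T t x) ηs s ∧
        HasDerivAt (deriv (fun x => bsCall r σ K₀ T t x)) ηss s ∧
        ηt + r * s * ηs + (1/2) * σ^2 * s^2 * ηss = r * bsCall r σ K₀ T t s) ∧
    (∀ s ∈ Set.Ioi (0:ℝ),
      Tendsto (fun t => bsCall r σ K₀ T t s) (nhdsWithin T (Set.Iio T))
        (nhds (max (s - K₀) 0))) :=
  stmt_17_general r σ K₀ T hσ hK₀
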